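/- The function Θ(z) = -(c/6)e^{-z}H(z) + ((c/3)e^{2z} - (c/2)e^{z})H(-z), where H is the Heaviside step function with H(0) = 1/2, is continuously differentiable on ℝ, with Θ(0) = -c/6 and Θ'(0) = c/6, but Θ'' has a jump discontinuity at z = 0 (the left and right limits of Θ'' at 0 differ) whenever c ≠ 0. -/

import Mathlib

noncomputable def Heav (x : ℝ) : ℝ := if 0 < x then 1 else if x = 0 then 1 / 2 else 0

noncomputable def Θ (c : ℝ) (z : ℝ) : ℝ :=
  -(c / 6) * Real.exp (-z) * Heav z
    + (c / 3 * Real.exp (2 * z) - c / 2 * Real.exp z) * Heav (-z)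

open Real Filter Set Topology

noncomputable def fpo (c z : ℝ) : ℝ := -(c / 6) * Real.exp (-z)
noncomputable def fne (c z : ℝ) : ℝ := c / 3 * Real.exp (2 * z) - c / 2 * Real.exp z
noncomputable def Dfun (c z : ℝ) : ℝ :=
  if 0 ≤ z then c / 6 * Real.exp (-z)
  else 2 * (c / 3) * Real.exp (2 * z) - c / 2 * Real.exp z

lemma theta_eq (c z : ℝ) : Θ c z = if 0 ≤ z then fpo c z else fne c z := by
  unfold Θ Heav fpo fne
  rcases lt_trichotomy z 0 with h | h | h
  · simp only [if_neg (not_lt.2 h.le), if_neg h.ne, if_pos (neg_pos.2 h),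
      if_neg (not_le.2 h)]
    ring
  · subst h
    norm_num
    ring
  · simp only [if_pos h, if_neg (not_lt.2 (neg_nonpos.2 h.le)),
      if_neg (neg_ne_zero.2 h.ne'), if_pos h.le]
    ring

lemma hasDeriv_fpo (c z : ℝ) : HasDerivAt (fpo c) (c / 6 * Real.exp (-z)) z := by
  have h := ((hasDerivAt_neg z).exp).const_mul (-(c / 6))
  exact h.congr_deriv (by ring)

lemma hasDeriv_fne (c z : ℝ) :
    HasDerivAt (fne c) (2 * (c / 3) * Real.exp (2 * z) - c / 2 * Real.exp z) z := by
  have h1 := (((hasDerivAt_id z).const_mul 2).exp).const_mul (c / 3)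
  have h2 := (Real.hasDerivAt_exp z).const_mul (c / 2)
  have h := h1.sub h2
  simp only [id_eq] at h
  exact h.congr_deriv (by ring)

lemma hasDerivTheta (c z : ℝ) : HasDerivAt (Θ c) (Dfun c z) z := by
  rcases lt_trichotomy z 0 with h | h | h
  · have heq : Θ c =ᶠ[𝓝 z] fne c := by
      filter_upwards [Iio_mem_nhds h] with x hx
      rw [theta_eq, if_neg (not_le.2 hx)]
    rw [Dfun, if_neg (not_le.2 h)]
    exact (hasDeriv_fne c z).congr_of_eventuallyEq heq
  · subst h
    have hD : Dfun c 0 = c / 6 := by simp [Dfun]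
    rw [hD]
    rw [hasDerivAt_iff_tendsto_slope]
    have hpo : Tendsto (slope (fpo c) 0) (𝓝[≠] (0:ℝ)) (𝓝 (c / 6)) := by
      have := hasDerivAt_iff_tendsto_slope.1 (hasDeriv_fpo c 0)
      simpa using this
    have hne : Tendsto (slope (fne c) 0) (𝓝[≠] (0:ℝ)) (𝓝 (c / 6)) := by
      have := hasDerivAt_iff_tendsto_slope.1 (hasDeriv_fne c 0)
      have e : 2 * (c / 3) * Real.exp (2 * 0) - c / 2 * Real.exp 0 = c / 6 := by
        norm_num; ring
      rw [e] at this
      exact this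
    rw [← nhdsLT_sup_nhdsGT, tendsto_sup]
    constructor
    · refine (hne.mono_left (nhdsWithin_mono _ ?_)).congr' ?_
      · exact fun x hx => ne_of_lt hx
      · filter_upwards [self_mem_nhdsWithin] with x (hx : x < 0)
        simp only [slope_def_field]
        rw [theta_eq, if_neg (not_le.2 hx), theta_eq, if_pos le_rfl]
        have : fne c 0 = fpo c 0 := by
          simp [fne, fpo]; ring
        rw [this]
    · refine (hpo.mono_left (nhdsWithin_mono _ ?_)).congr' ?_
      · exact fun x hx => ne_of_gt hx
      · filter_upwards [self_mem_nhdsWithin] with x (hx : 0 < x)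
        simp only [slope_def_field]
        rw [theta_eq, if_pos hx.le, theta_eq, if_pos le_rfl]
  · have heq : Θ c =ᶠ[𝓝 z] fpo c := by
      filter_upwards [Ioi_mem_nhds h] with x hx
      rw [theta_eq, if_pos (le_of_lt hx)]
    rw [Dfun, if_pos h.le]
    exact (hasDeriv_fpo c z).congr_of_eventuallyEq heq

lemma contDfun (c : ℝ) : Continuous (Dfun c) := by
  have : Dfun c = fun z => if (fun _ : ℝ => (0:ℝ)) z ≤ id z then c / 6 * Real.exp (-z)
      else 2 * (c / 3) * Real.exp (2 * z) - c / 2 * Real.exp z := rfl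
  rw [this]
  apply Continuous.if_le
  · exact continuous_const.mul (Real.continuous_exp.comp continuous_neg)
  · exact (continuous_const.mul (Real.continuous_exp.comp (continuous_const.mul
      continuous_id))).sub (continuous_const.mul Real.continuous_exp)
  · exact continuous_const
  · exact continuous_id
  · intro x hx
    simp only [id_eq] at hx
    subst hx
    simp only [Real.exp_zero, neg_zero, mul_one, mul_zero]
    ring

lemma derivTheta (c : ℝ) : deriv (Θ c) = Dfun c :=
  funext fun z => (hasDerivTheta c z).deriv

theorem stmt13 (c : ℝ) :
    ContDiff ℝ 1 (Θ c) ∧ Θ c 0 = -(c / 6) ∧ deriv (Θ c) 0 = c / 6 ∧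
      (c ≠ 0 → ∃ L R : ℝ,
        Filter.Tendsto (deriv (deriv (Θ c))) (nhdsWithin 0 (Set.Iio 0)) (nhds L) ∧
        Filter.Tendsto (deriv (deriv (Θ c))) (nhdsWithin 0 (Set.Ioi 0)) (nhds R) ∧
        L ≠ R) := by
  refine ⟨?_, ?_, ?_, ?_⟩
  · rw [contDiff_one_iff_deriv]
    exact ⟨fun z => (hasDerivTheta c z).differentiableAt, by rw [derivTheta]; exact contDfun c⟩
  · rw [theta_eq, if_pos le_rfl]
    simp [fpo]
  · rw [derivTheta]
    simp [Dfun]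
  · intro hc
    refine ⟨4 * (c / 3) - c / 2, -(c / 6), ?_, ?_, ?_⟩
    · rw [derivTheta]
      have hev : ∀ᶠ x in 𝓝[<] (0:ℝ),
          deriv (Dfun c) x = 2 * (2 * (c / 3)) * Real.exp (2 * x) - c / 2 * Real.exp x := by
        filter_upwards [self_mem_nhdsWithin] with x (hx : x < 0)
        have heq : Dfun c =ᶠ[𝓝 x]
            fun z => 2 * (c / 3) * Real.exp (2 * z) - c / 2 * Real.exp z := by
          filter_upwards [Iio_mem_nhds hx] with y hy
          rw [Dfun, if_neg (not_le.2 hy)]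
        rw [Filter.EventuallyEq.deriv_eq heq]
        have h1 := (((hasDerivAt_id x).const_mul 2).exp).const_mul (2 * (c / 3))
        have h2 := (Real.hasDerivAt_exp x).const_mul (c / 2)
        have h := h1.sub h2
        simp only [id_eq] at h
        have h' : HasDerivAt (fun z => 2 * (c / 3) * Real.exp (2 * z) - c / 2 * Real.exp z)
            (2 * (2 * (c / 3)) * Real.exp (2 * x) - c / 2 * Real.exp x) x := by
          exact h.congr_deriv (by ring)
        rw [h'.deriv]
      refine Tendsto.congr' (by filter_upwards [hev] with x h; exact h.symm) ?_
      have hcont : Tendsto (fun x : ℝ => 2 * (2 * (c / 3)) * Real.exp (2 * x) - c / 2 * Real.exp x)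
          (𝓝 (0:ℝ)) (𝓝 (4 * (c / 3) - c / 2)) := by
        have : (4 * (c / 3) - c / 2) =
            2 * (2 * (c / 3)) * Real.exp (2 * 0) - c / 2 * Real.exp 0 := by
          simp only [mul_zero, Real.exp_zero, mul_one]; ring
        rw [this]
        exact (Continuous.tendsto (by continuity) 0)
      exact hcont.mono_left nhdsWithin_le_nhds
    · rw [derivTheta]
      have hev : ∀ᶠ x in 𝓝[>] (0:ℝ),
          deriv (Dfun c) x = -(c / 6) * Real.exp (-x) := by
        filter_upwards [self_mem_nhdsWithin] with x (hx : 0 < x)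
        have heq : Dfun c =ᶠ[𝓝 x] fun z => c / 6 * Real.exp (-z) := by
          filter_upwards [Ioi_mem_nhds hx] with y hy
          rw [Dfun, if_pos hy.le]
        rw [Filter.EventuallyEq.deriv_eq heq]
        have h := ((hasDerivAt_neg x).exp).const_mul (c / 6)
        rw [HasDerivAt.deriv h]
        ring
      refine Tendsto.congr' (by filter_upwards [hev] with x h; exact h.symm) ?_
      have hcont : Tendsto (fun x : ℝ => -(c / 6) * Real.exp (-x))
          (𝓝 (0:ℝ)) (𝓝 (-(c / 6))) := by
        have := ((continuous_const.mul (Real.continuous_exp.comp continuous_neg)).tendsto (0:ℝ)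
          : Tendsto (fun x : ℝ => -(c / 6) * Real.exp (-x)) (𝓝 0) (𝓝 (-(c / 6) * Real.exp (-0))))
        exact this.mono_right (le_of_eq (by simp))
      exact hcont.mono_left nhdsWithin_le_nhds
    · intro h
      apply hc
      linarith
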